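/- arXiv:0802.0021 — 2 statements merged into one kernel-verified Lean document; each statement's English description precedes it below -/
import Mathlib

section
/- Equidispersion of Poisson systems: let N be a random variable taking values in nonnegative integers with P(N = 1) = μδ + o(δ), P(N = 0) = 1 - μδ + o(δ), and tail bound P(N > k) ≤ F̄(k, νδ) for all k ≥ 0, where F̄(k, λ) = Σ_{j>k} λ^j e^{-λ}/j! is the Poisson tail. Then E[N] = μδ + o(δ) and Var(N) = μδ + o(δ) as δ → 0. -/
/-!
With `pₙ = P(N = n)`, both moments split as `E[N] = p₁ + Σ_{n≥2} n pₙ` and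
`E[N²] = p₁ + Σ_{n≥2} n² pₙ`. A single mass is bounded by the tail containing it, so the Poisson
tail bound gives `pₙ ≤ (νδ)ⁿ / n!` for `n ≥ 1`; as `n² / n! ≤ 2 / (n - 2)!`, both remainders are at
most `2 (νδ)² e^{νδ} = O(δ²)`. Hence both moments are `p₁ + o(δ) = μδ + o(δ)`, while
`E[N]² = O(δ²)`.
-/

open Filter Asymptotics Topology Nat

theorem tsum_poisson_tail_le (r : ℝ) (hr : 0 ≤ r) (m : ℕ) :
    ∑' j : ℕ, r ^ (m + j) * Real.exp (-r) / (m + j)! ≤ r ^ m / m ! := by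
  have hterm (j : ℕ) : r ^ (m + j) * Real.exp (-r) / (m + j)! ≤
      r ^ m / m ! * (r ^ j / j !) * Real.exp (-r) := by
    have hfac : (m ! * j ! : ℝ) ≤ (m + j)! := by
      exact_mod_cast Nat.le_of_dvd (factorial_pos _) (factorial_mul_factorial_dvd_factorial_add m j)
    calc r ^ (m + j) * Real.exp (-r) / (m + j)! ≤ r ^ (m + j) * Real.exp (-r) / (m ! * j !) := by
          gcongr
      _ = r ^ m / m ! * (r ^ j / j !) * Real.exp (-r) := by rw [pow_add]; field_simp
  have hsum : Summable fun j : ℕ => r ^ m / m ! * (r ^ j / j !) * Real.exp (-r) :=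
    ((Real.summable_pow_div_factorial r).mul_left _).mul_right _
  calc _ ≤ ∑' j : ℕ, r ^ m / m ! * (r ^ j / j !) * Real.exp (-r) :=
        (hsum.of_nonneg_of_le (fun j => by positivity) hterm).tsum_le_tsum hterm hsum
    _ = r ^ m / m ! * (∑' j : ℕ, r ^ j / j !) * Real.exp (-r) := by
        rw [tsum_mul_right, tsum_mul_left]
    _ ≤ r ^ m / m ! * Real.exp r * Real.exp (-r) := by
        gcongr
        exact Real.tsum_le_of_sum_range_le (fun n => by positivity) (Real.sum_le_exp_of_nonneg hr)
    _ = r ^ m / m ! := by rw [mul_assoc, ← Real.exp_add, add_neg_cancel, Real.exp_zero, mul_one]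

theorem le_tsum_nat_add {q : ℕ → ℝ} (hq : ∀ n, 0 ≤ q n) (hsum : Summable q) (m : ℕ) :
    q m ≤ ∑' j, q (m + j) := by
  have hshift : Summable fun j => q (m + j) := by
    simpa only [add_comm m] using (summable_nat_add_iff m).2 hsum
  simpa using hshift.le_tsum 0 fun j _ => hq _

theorem sq_add_two_div_factorial_le (n : ℕ) : ((n : ℝ) + 2) ^ 2 / (n + 2)! ≤ 2 / n ! := by
  have hn : (0 : ℝ) < n ! := by positivity
  rw [div_le_div_iff₀ (by positivity) hn]
  push_cast [factorial_succ]
  nlinarith [mul_nonneg (Nat.cast_nonneg (α := ℝ) n) hn.le]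

theorem tsum_eq_one_add_tsum_add_two {G : Type*} [AddCommGroup G] [TopologicalSpace G]
    [IsTopologicalAddGroup G] [T2Space G] {f : ℕ → G} (hf : Summable f) (h0 : f 0 = 0) :
    ∑' n, f n = f 1 + ∑' n, f (n + 2) := by
  rw [← hf.sum_add_tsum_nat_add 2]
  simp [Finset.sum_range_succ, h0]

section Moments

variable {q : ℕ → ℝ} {r : ℝ}

theorem sq_add_two_mul_le (hr : 0 ≤ r) (hle : ∀ n, q (n + 2) ≤ r ^ (n + 2) / (n + 2)!) (n : ℕ) :
    ((n : ℝ) + 2) ^ 2 * q (n + 2) ≤ 2 * r ^ 2 * (r ^ n / n !) :=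
  calc ((n : ℝ) + 2) ^ 2 * q (n + 2) ≤ ((n : ℝ) + 2) ^ 2 * (r ^ (n + 2) / (n + 2)!) := by
        gcongr; exact hle n
    _ = r ^ 2 * r ^ n * (((n : ℝ) + 2) ^ 2 / (n + 2)!) := by ring
    _ ≤ r ^ 2 * r ^ n * (2 / n !) :=
        mul_le_mul_of_nonneg_left (sq_add_two_div_factorial_le n) (by positivity)
    _ = 2 * r ^ 2 * (r ^ n / n !) := by ring

theorem tsum_natCast_mul_eq (hsum : Summable fun n : ℕ => (n : ℝ) * q n) :
    ∑' n : ℕ, (n : ℝ) * q n = q 1 + ∑' n : ℕ, ((n : ℝ) + 2) * q (n + 2) := by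
  simpa using tsum_eq_one_add_tsum_add_two hsum (by simp)

theorem tsum_natCast_sq_mul_eq (hsum : Summable fun n : ℕ => (n : ℝ) ^ 2 * q n) :
    ∑' n : ℕ, (n : ℝ) ^ 2 * q n = q 1 + ∑' n : ℕ, ((n : ℝ) + 2) ^ 2 * q (n + 2) := by
  simpa using tsum_eq_one_add_tsum_add_two hsum (by simp)

variable (hq : ∀ n, 0 ≤ q n) (hr : 0 ≤ r) (hle : ∀ n, q (n + 2) ≤ r ^ (n + 2) / (n + 2)!)
include hq hr hle

theorem summable_sq_add_two_mul : Summable fun n : ℕ => ((n : ℝ) + 2) ^ 2 * q (n + 2) :=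
  ((Real.summable_pow_div_factorial r).mul_left _).of_nonneg_of_le
    (fun n => mul_nonneg (by positivity) (hq _)) (sq_add_two_mul_le hr hle)

theorem tsum_sq_add_two_mul_le :
    ∑' n : ℕ, ((n : ℝ) + 2) ^ 2 * q (n + 2) ≤ 2 * r ^ 2 * Real.exp r :=
  calc ∑' n : ℕ, ((n : ℝ) + 2) ^ 2 * q (n + 2) ≤ ∑' n : ℕ, 2 * r ^ 2 * (r ^ n / n !) :=
        (summable_sq_add_two_mul hq hr hle).tsum_le_tsum (sq_add_two_mul_le hr hle)
          ((Real.summable_pow_div_factorial r).mul_left _)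
    _ ≤ 2 * r ^ 2 * Real.exp r := by
        rw [tsum_mul_left]
        gcongr
        exact Real.tsum_le_of_sum_range_le (fun n => by positivity) (Real.sum_le_exp_of_nonneg hr)

theorem summable_natCast_sq_mul : Summable fun n : ℕ => (n : ℝ) ^ 2 * q n :=
  (summable_nat_add_iff 2).1 <| by
    simpa only [Nat.cast_add, Nat.cast_ofNat] using summable_sq_add_two_mul hq hr hle

theorem summable_natCast_mul : Summable fun n : ℕ => (n : ℝ) * q n :=
  (summable_natCast_sq_mul hq hr hle).of_nonneg_of_le (fun n => mul_nonneg n.cast_nonneg (hq n))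
    fun n => mul_le_mul_of_nonneg_right (by norm_cast; nlinarith) (hq n)

theorem tsum_add_two_mul_le :
    ∑' n : ℕ, ((n : ℝ) + 2) * q (n + 2) ≤ 2 * r ^ 2 * Real.exp r := by
  have hsum : Summable fun n : ℕ => ((n : ℝ) + 2) * q (n + 2) := by
    simpa only [Nat.cast_add, Nat.cast_ofNat] using
      (summable_nat_add_iff 2).2 (summable_natCast_mul hq hr hle)
  refine le_trans (hsum.tsum_le_tsum (fun n => ?_) (summable_sq_add_two_mul hq hr hle))
    (tsum_sq_add_two_mul_le hq hr hle)
  exact mul_le_mul_of_nonneg_right (by nlinarith [n.cast_nonneg (α := ℝ)]) (hq _)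

end Moments

theorem isLittleO_sq_mul_exp (c : ℝ) :
    (fun δ : ℝ => 2 * (c * δ) ^ 2 * Real.exp (c * δ)) =o[𝓝 0] fun δ => δ := by
  have hlim : Tendsto (fun δ : ℝ => 2 * c ^ 2 * δ * Real.exp (c * δ)) (𝓝 0) (𝓝 0) := by
    simpa using ((by fun_prop : Continuous fun δ : ℝ => 2 * c ^ 2 * δ * Real.exp (c * δ))).tendsto 0
  have h := (isBigO_refl (fun δ : ℝ => δ) (𝓝 0)).mul_isLittleO ((isLittleO_one_iff ℝ).2 hlim)
  exact (h.congr_left fun δ => by ring).congr_right fun δ => mul_one δ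

theorem isLittleO_of_le_sq_mul_exp {c : ℝ} {f : ℝ → ℝ}
    (hf : ∀ δ, 0 < δ → 0 ≤ f δ ∧ f δ ≤ 2 * (c * δ) ^ 2 * Real.exp (c * δ)) :
    f =o[𝓝[>] 0] fun δ => δ := by
  refine IsBigO.trans_isLittleO ?_ ((isLittleO_sq_mul_exp c).mono nhdsWithin_le_nhds)
  refine IsBigO.of_bound' (eventually_mem_nhdsWithin.mono fun δ hδ => ?_)
  obtain ⟨h0, hle⟩ := hf δ hδ
  rw [Real.norm_of_nonneg h0]
  exact hle.trans (le_abs_self _)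

theorem isLittleO_sq_of_isBigO {l : Filter ℝ} (hl : l ≤ 𝓝 0) {f : ℝ → ℝ}
    (hf : f =O[l] fun δ => δ) : (fun δ => f δ ^ 2) =o[l] fun δ => δ := by
  have hf₀ : f =o[l] fun _ => (1 : ℝ) :=
    hf.trans_isLittleO ((isLittleO_one_iff ℝ).2 (tendsto_id.mono_left hl))
  simpa only [sq, mul_one] using hf.mul_isLittleO hf₀

theorem poisson_system_equidispersion_general (μ ν : ℝ) (hν : 0 < ν)
    (p : ℝ → ℕ → ℝ)
    (hnonneg : ∀ δ, 0 < δ → ∀ n, 0 ≤ p δ n)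
    (hsum : ∀ δ, 0 < δ → (∑' n : ℕ, p δ n) = 1)
    (hone : (fun δ => p δ 1 - μ * δ) =o[nhdsWithin 0 (Set.Ioi 0)] (fun δ : ℝ => δ))
    (htail : ∀ δ, 0 < δ → ∀ k : ℕ,
      (∑' j : ℕ, p δ (k + 1 + j)) ≤
        ∑' j : ℕ, (ν * δ) ^ (k + 1 + j) * Real.exp (-(ν * δ)) / Nat.factorial (k + 1 + j)) :
    ((fun δ => (∑' n : ℕ, (n : ℝ) * p δ n) - μ * δ) =o[nhdsWithin 0 (Set.Ioi 0)]
        (fun δ : ℝ => δ)) ∧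
    ((fun δ => ((∑' n : ℕ, (n : ℝ) ^ 2 * p δ n) - (∑' n : ℕ, (n : ℝ) * p δ n) ^ 2) - μ * δ)
        =o[nhdsWithin 0 (Set.Ioi 0)] (fun δ : ℝ => δ)) := by
  have hrate (δ : ℝ) (hδ : 0 < δ) : 0 ≤ ν * δ := by positivity
  have hsummable (δ : ℝ) (hδ : 0 < δ) : Summable (p δ) := by
    by_contra h
    simpa [tsum_eq_zero_of_not_summable h] using hsum δ hδ
  have hmass (δ : ℝ) (hδ : 0 < δ) (n : ℕ) : p δ (n + 2) ≤ (ν * δ) ^ (n + 2) / (n + 2)! :=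
    (le_tsum_nat_add (hnonneg δ hδ) (hsummable δ hδ) _).trans
      ((htail δ hδ (n + 1)).trans (tsum_poisson_tail_le _ (hrate δ hδ) _))
  have hR₁ : (fun δ => ∑' n : ℕ, ((n : ℝ) + 2) * p δ (n + 2)) =o[𝓝[>] 0] fun δ => δ :=
    isLittleO_of_le_sq_mul_exp fun δ hδ =>
      ⟨tsum_nonneg fun n => mul_nonneg (by positivity) (hnonneg δ hδ _),
        tsum_add_two_mul_le (hnonneg δ hδ) (hrate δ hδ) (hmass δ hδ)⟩
  have hR₂ : (fun δ => ∑' n : ℕ, ((n : ℝ) + 2) ^ 2 * p δ (n + 2)) =o[𝓝[>] 0] fun δ => δ :=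
    isLittleO_of_le_sq_mul_exp fun δ hδ =>
      ⟨tsum_nonneg fun n => mul_nonneg (by positivity) (hnonneg δ hδ _),
        tsum_sq_add_two_mul_le (hnonneg δ hδ) (hrate δ hδ) (hmass δ hδ)⟩
  have hmean : (fun δ => (∑' n : ℕ, (n : ℝ) * p δ n) - μ * δ) =o[𝓝[>] 0] fun δ => δ := by
    refine (hone.add hR₁).congr' (eventually_mem_nhdsWithin.mono fun δ hδ => ?_) EventuallyEq.rfl
    dsimp only
    rw [tsum_natCast_mul_eq (summable_natCast_mul (hnonneg δ hδ) (hrate δ hδ) (hmass δ hδ))]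
    ring
  have hmean_sq : (fun δ => (∑' n : ℕ, (n : ℝ) * p δ n) ^ 2) =o[𝓝[>] 0] fun δ => δ :=
    isLittleO_sq_of_isBigO nhdsWithin_le_nhds <|
      (hmean.isBigO.add (isBigO_const_mul_self μ _ _)).congr_left fun δ => sub_add_cancel _ _
  refine ⟨hmean, ((hone.add hR₂).sub hmean_sq).congr'
    (eventually_mem_nhdsWithin.mono fun δ hδ => ?_) EventuallyEq.rfl⟩
  dsimp only
  rw [tsum_natCast_sq_mul_eq (summable_natCast_sq_mul (hnonneg δ hδ) (hrate δ hδ) (hmass δ hδ))]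
  ring

/-- Equidispersion of Poisson systems (Appendix B): if a family `N(δ)` of
nonnegative-integer-valued random variables, with distribution `p δ`, satisfies
`P(N = 1) = μδ + o(δ)`, `P(N = 0) = 1 - μδ + o(δ)` and the Poisson tail bound
`P(N > k) ≤ F̄(k, νδ)`, then `E[N] = μδ + o(δ)` and `Var(N) = μδ + o(δ)` as `δ → 0⁺`. -/
theorem poisson_system_equidispersion (μ ν : ℝ) (hμ : 0 < μ) (hν : 0 < ν) (hμν : μ ≤ ν)
    (p : ℝ → ℕ → ℝ)
    (hnonneg : ∀ δ, 0 < δ → ∀ n, 0 ≤ p δ n)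
    (hsum : ∀ δ, 0 < δ → (∑' n : ℕ, p δ n) = 1)
    (hone : (fun δ => p δ 1 - μ * δ) =o[nhdsWithin 0 (Set.Ioi 0)] (fun δ : ℝ => δ))
    (hzero : (fun δ => p δ 0 - (1 - μ * δ)) =o[nhdsWithin 0 (Set.Ioi 0)] (fun δ : ℝ => δ))
    (htail : ∀ δ, 0 < δ → ∀ k : ℕ,
      (∑' j : ℕ, p δ (k + 1 + j)) ≤
        ∑' j : ℕ, (ν * δ) ^ (k + 1 + j) * Real.exp (-(ν * δ)) / Nat.factorial (k + 1 + j)) :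
    ((fun δ => (∑' n : ℕ, (n : ℝ) * p δ n) - μ * δ) =o[nhdsWithin 0 (Set.Ioi 0)]
        (fun δ : ℝ => δ)) ∧
    ((fun δ => ((∑' n : ℕ, (n : ℝ) ^ 2 * p δ n) - (∑' n : ℕ, (n : ℝ) * p δ n) ^ 2) - μ * δ)
        =o[nhdsWithin 0 (Set.Ioi 0)] (fun δ : ℝ => δ)) :=
  poisson_system_equidispersion_general μ ν hν p hnonneg hsum hone htail
end

section
/- Infinitesimal overdispersion with gamma noise: for fixed x ≥ 1, μ > 0, σ > 0, the first-order (in δ) mean of the transition count with probabilities π(n, x, μ, σ) is m₁ = Σ_{n=1}^{x} n·c(n) where c(n) = C(x,n) Σ_{k=0}^{n} C(n,k)(-1)^{n-k+1} σ^{-2} ln(1+σ²μ(x-k)), and the first-order second moment m₂ = Σ_{n=1}^{x} n²·c(n) satisfies m₂ > m₁ whenever x ≥ 2; i.e., the infinitesimal variance exceeds the infinitesimal mean. -/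
/-!
With `a = σ²μ`, the inner sum in `c n` is `-σ⁻² Δ_{-a}ⁿ log (1 + a x)`, an `n`-th forward
difference of `log` with negative step `h`. Differences commute with differentiation, and
`Δ_hⁿ (t ↦ t⁻¹) t = (-h)ⁿ n! / ∏_{k ≤ n} (t + k h) > 0`, so `Δ_hⁿ log` is strictly increasing
and `Δ_h^{n+1} log t = Δ_hⁿ log (t + h) - Δ_hⁿ log t < 0`. Hence `c n > 0` for `1 ≤ n ≤ x`,
and `m₂ - m₁ = ∑ n (n - 1) c n > 0` since the term `n = 2` is positive.
-/

open Finset fwdDiff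

theorem hasDerivAt_fwdDiff_iter {𝕜 F : Type*} [NontriviallyNormedField 𝕜] [NormedAddCommGroup F]
    [NormedSpace 𝕜 F] {f f' : 𝕜 → F} {h t : 𝕜} {n : ℕ}
    (hf : ∀ k ≤ n, HasDerivAt f (f' (t + k * h)) (t + k * h)) :
    HasDerivAt (Δ_[h] ^[n] f) (Δ_[h] ^[n] f' t) t := by
  simp only [funext (fwdDiff_iter_eq_sum_shift h _ n), nsmul_eq_mul]
  exact HasDerivAt.fun_sum fun k hk =>
    ((hf k (Nat.lt_succ_iff.mp (mem_range.mp hk))).comp_add_const t _).const_smul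
      ((-1 : ℤ) ^ (n - k) * n.choose k)

theorem fwdDiff_iter_inv_apply {K : Type*} [Field K] {h t : K} {n : ℕ}
    (ht : ∀ k ≤ n, t + k * h ≠ 0) :
    Δ_[h] ^[n] (fun s => s⁻¹) t = (-h) ^ n * n.factorial / ∏ k ∈ range (n + 1), (t + k * h) := by
  induction n generalizing t with
  | zero => simp
  | succ n ih =>
    have hshift : ∀ k ≤ n, t + h + k * h = t + (k + 1 : ℕ) * h := fun k _ => by push_cast; ring
    rw [Function.iterate_succ_apply', fwdDiff, ih fun k hk => hshift k hk ▸ ht (k + 1) (by omega),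
      ih fun k hk => ht k (by omega)]
    set P := ∏ k ∈ range n, (t + (k + 1 : ℕ) * h)
    have hP : P ≠ 0 := prod_ne_zero_iff.mpr fun k hk => ht (k + 1) (by simp at hk; omega)
    have h0 : t ≠ 0 := by simpa using ht 0 (by omega)
    have hn : t + (n + 1) * h ≠ 0 := by simpa using ht (n + 1) le_rfl
    have hprod_shift : ∏ k ∈ range (n + 1), (t + h + k * h) = P * (t + (n + 1) * h) := by
      rw [prod_range_succ, prod_congr rfl fun k hk => hshift k (by simp at hk; omega)]
      congr 1; ring
    have hprod : ∏ k ∈ range (n + 1), (t + k * h) = P * t := by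
      rw [prod_range_succ']; simp [P]
    have hprod_succ : ∏ k ∈ range (n + 1 + 1), (t + k * h) = P * t * (t + (n + 1) * h) := by
      rw [prod_range_succ, hprod]; push_cast; ring
    rw [hprod_shift, hprod, hprod_succ, Nat.factorial_succ,
      div_sub_div _ _ (mul_ne_zero hP hn) (mul_ne_zero hP h0),
      div_eq_div_iff (mul_ne_zero (mul_ne_zero hP hn) (mul_ne_zero hP h0))
        (mul_ne_zero (mul_ne_zero hP h0) hn)]
    push_cast
    ring

theorem hasDerivAt_fwdDiff_iter_log {h t : ℝ} {n : ℕ} (ht : ∀ k ≤ n, 0 < t + k * h) :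
    HasDerivAt (Δ_[h] ^[n] Real.log)
      ((-h) ^ n * n.factorial / ∏ k ∈ range (n + 1), (t + k * h)) t := by
  rw [← fwdDiff_iter_inv_apply fun k hk => (ht k hk).ne']
  exact hasDerivAt_fwdDiff_iter fun k hk => Real.hasDerivAt_log (ht k hk).ne'

theorem strictMonoOn_fwdDiff_iter_log {h : ℝ} (hh : h < 0) (n : ℕ) :
    StrictMonoOn (Δ_[h] ^[n] Real.log) (Set.Ioi (-(n * h))) := by
  have hpos : ∀ t ∈ Set.Ioi (-(n * h)), ∀ k ≤ n, 0 < t + k * h := fun t ht k hk => by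
    have : (k : ℝ) ≤ n := by exact_mod_cast hk
    simp only [Set.mem_Ioi] at ht
    nlinarith
  refine strictMonoOn_of_deriv_pos (convex_Ioi _)
    (fun t ht => (hasDerivAt_fwdDiff_iter_log (hpos t ht)).continuousAt.continuousWithinAt)
    fun t ht => ?_
  rw [interior_Ioi] at ht
  have hprod : 0 < ∏ k ∈ range (n + 1), (t + k * h) :=
    prod_pos fun k hk => hpos t ht k (Nat.lt_succ_iff.mp (mem_range.mp hk))
  have hh' : 0 < -h := neg_pos.mpr hh
  rw [(hasDerivAt_fwdDiff_iter_log (hpos t ht)).deriv]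
  positivity

theorem fwdDiff_iter_log_neg {h t : ℝ} (hh : h < 0) {n : ℕ} (hn : 0 < n) (ht : 0 < t + n * h) :
    Δ_[h] ^[n] Real.log t < 0 := by
  obtain ⟨m, rfl⟩ := Nat.exists_eq_succ_of_ne_zero hn.ne'
  rw [Function.iterate_succ_apply', fwdDiff, sub_neg]
  push_cast at ht
  exact strictMonoOn_fwdDiff_iter_log hh m (by simp only [Set.mem_Ioi]; linarith)
    (by simp only [Set.mem_Ioi]; nlinarith) (by linarith)

theorem sum_choose_mul_log_div_eq_neg_fwdDiff_iter (a x s : ℝ) (n : ℕ) :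
    ∑ k ∈ range (n + 1),
        (n.choose k : ℝ) * (-1 : ℝ) ^ (n - k + 1) * (Real.log (1 + a * (x - k)) / s)
      = -Δ_[-a] ^[n] Real.log (1 + a * x) / s := by
  rw [fwdDiff_iter_eq_sum_shift, neg_div, sum_div, ← sum_neg_distrib]
  refine sum_congr rfl fun k _ => ?_
  simp only [zsmul_eq_mul, nsmul_eq_mul]
  push_cast
  ring_nf

theorem sum_mul_lt_sum_sq_mul {s : Finset ℕ} {c : ℕ → ℝ} (hc : ∀ n ∈ s, 0 ≤ c n) {m : ℕ}
    (hm : m ∈ s) (hm2 : 2 ≤ m) (hcm : 0 < c m) :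
    ∑ n ∈ s, (n : ℝ) * c n < ∑ n ∈ s, (n : ℝ) ^ 2 * c n := by
  have hsq_sub : ∀ n : ℕ, (n : ℝ) ^ 2 * c n - n * c n = ((n : ℝ) ^ 2 - n) * c n :=
    fun n => (sub_mul _ _ _).symm
  have hself_le_sq : ∀ n : ℕ, (n : ℝ) ≤ (n : ℝ) ^ 2 := fun n => by
    exact_mod_cast Nat.le_self_pow two_ne_zero n
  rw [← sub_pos, ← sum_sub_distrib]
  refine sum_pos' (fun n hn => ?_) ⟨m, hm, ?_⟩
  · rw [hsq_sub]; exact mul_nonneg (sub_nonneg.mpr (hself_le_sq n)) (hc n hn)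
  · have : (2 : ℝ) ≤ m := by exact_mod_cast hm2
    rw [hsq_sub]; exact mul_pos (by nlinarith) hcm

/-- Infinitesimal overdispersion with gamma noise: for the jump rates
`c(n) = C(x,n) ∑_{k=0}^n C(n,k) (-1)^(n-k+1) σ⁻² ln(1+σ²μ(x-k))` of Theorem A.2,
the first-order second moment exceeds the first-order mean whenever `x ≥ 2`:
`∑_{n=1}^x n² c(n) > ∑_{n=1}^x n c(n)`. -/
theorem infinitesimal_overdispersion (x : ℕ) (hx : 2 ≤ x) (μ σ : ℝ) (hμ : 0 < μ) (hσ : 0 < σ)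
    (c : ℕ → ℝ)
    (hc : ∀ n, c n = (x.choose n : ℝ) * ∑ k ∈ range (n + 1),
        (n.choose k : ℝ) * (-1 : ℝ) ^ (n - k + 1) *
          (Real.log (1 + σ ^ 2 * μ * ((x : ℝ) - k)) / σ ^ 2)) :
    (∑ n ∈ Icc 1 x, (n : ℝ) ^ 2 * c n) > ∑ n ∈ Icc 1 x, (n : ℝ) * c n := by
  have ha : 0 < σ ^ 2 * μ := by positivity
  have hc_pos : ∀ n ∈ Icc 1 x, 0 < c n := fun n hn => by
    obtain ⟨hn1, hnx⟩ := mem_Icc.mp hn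
    have hnx' : (n : ℝ) ≤ x := by exact_mod_cast hnx
    have hΔ := fwdDiff_iter_log_neg (h := -(σ ^ 2 * μ)) (t := 1 + σ ^ 2 * μ * x)
      (neg_neg_of_pos ha) hn1 (by nlinarith)
    rw [hc, sum_choose_mul_log_div_eq_neg_fwdDiff_iter]
    exact mul_pos (by exact_mod_cast Nat.choose_pos hnx) (div_pos (neg_pos.mpr hΔ) (by positivity))
  exact sum_mul_lt_sum_sq_mul (fun n hn => (hc_pos n hn).le) (mem_Icc.mpr ⟨by norm_num, hx⟩) le_rfl
    (hc_pos 2 (mem_Icc.mpr ⟨by norm_num, hx⟩))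
end
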